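/- arXiv:2211.09764 — 4 statements merged into one kernel-verified Lean document; each statement's English description precedes it below -/
import Mathlib

section
/- Let H be the set {x ∈ ℝ² : (x − c)ᵀA(x − c) = 1} with A a nonsingular symmetric 2×2 matrix with det A < 0. Then there exist nonzero vectors v₁, v₂, not multiples of each other, such that v₁ᵀAv₁ = 0, v₂ᵀAv₂ = 0, and v₁ᵀAv₂ = 1/2, and H equals the set {c + t·v₁ + (1/t)·v₂ : t ∈ ℝ, t ≠ 0}. -/
open Matrix

lemma expand_qf (A : Matrix (Fin 2) (Fin 2) ℝ) (v w : Fin 2 → ℝ) :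
    v ⬝ᵥ A *ᵥ w = v 0 * (A 0 0 * w 0 + A 0 1 * w 1) + v 1 * (A 1 0 * w 0 + A 1 1 * w 1) := by
  simp [Matrix.mulVec, dotProduct, Fin.sum_univ_two]

lemma key (A : Matrix (Fin 2) (Fin 2) ℝ) (hsym : A 1 0 = A 0 1) (c : Fin 2 → ℝ)
    (v₁ v₂ : Fin 2 → ℝ)
    (h1 : v₁ ⬝ᵥ A *ᵥ v₁ = 0) (h2 : v₂ ⬝ᵥ A *ᵥ v₂ = 0) (h12 : v₁ ⬝ᵥ A *ᵥ v₂ = 1/2)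
    (hD : v₁ 0 * v₂ 1 - v₁ 1 * v₂ 0 ≠ 0) :
    v₁ ≠ 0 ∧ v₂ ≠ 0 ∧
      (∀ t : ℝ, v₁ ≠ t • v₂) ∧ (∀ t : ℝ, v₂ ≠ t • v₁) ∧
      v₁ ⬝ᵥ A *ᵥ v₁ = 0 ∧ v₂ ⬝ᵥ A *ᵥ v₂ = 0 ∧ v₁ ⬝ᵥ A *ᵥ v₂ = 1/2 ∧
      {x : Fin 2 → ℝ | (x - c) ⬝ᵥ A *ᵥ (x - c) = 1}
        = {x | ∃ t : ℝ, t ≠ 0 ∧ x = c + t • v₁ + t⁻¹ • v₂} := by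
  rw [expand_qf] at h1 h2 h12
  refine ⟨?_, ?_, ?_, ?_, by rw [expand_qf]; linarith, by rw [expand_qf]; linarith,
    by rw [expand_qf]; linarith, ?_⟩
  · intro h; apply hD; rw [h]; simp
  · intro h; apply hD; rw [h]; simp
  · intro t h; apply hD
    have h0 := congrFun h 0; have h1' := congrFun h 1
    simp only [Pi.smul_apply, smul_eq_mul] at h0 h1'
    rw [h0, h1']; ring
  · intro t h; apply hD
    have h0 := congrFun h 0; have h1' := congrFun h 1
    simp only [Pi.smul_apply, smul_eq_mul] at h0 h1'
    rw [h0, h1']; ring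
  ext x
  simp only [Set.mem_setOf_eq, expand_qf, Pi.sub_apply]
  constructor
  · intro hx
    set α := (x 0 - c 0) * v₂ 1 - (x 1 - c 1) * v₂ 0 with hα
    set β := v₁ 0 * (x 1 - c 1) - v₁ 1 * (x 0 - c 0) with hβ
    set D := v₁ 0 * v₂ 1 - v₁ 1 * v₂ 0 with hDdef
    have hkey : α * β = D ^ 2 := by
      rw [hα, hβ, hDdef]
      linear_combination -(((x 0 - c 0) * v₂ 1 - (x 1 - c 1) * v₂ 0))^2 * h1
        - ((v₁ 0 * (x 1 - c 1) - v₁ 1 * (x 0 - c 0)))^2 * h2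
        - 2 * (((x 0 - c 0) * v₂ 1 - (x 1 - c 1) * v₂ 0)) * ((v₁ 0 * (x 1 - c 1) - v₁ 1 * (x 0 - c 0))) * h12
        + (v₁ 0 * v₂ 1 - v₁ 1 * v₂ 0)^2 * hx
        - (((x 0 - c 0) * v₂ 1 - (x 1 - c 1) * v₂ 0)) * ((v₁ 0 * (x 1 - c 1) - v₁ 1 * (x 0 - c 0))) * (v₁ 0 * v₂ 1 - v₁ 1 * v₂ 0) * hsym
    have hD2 : D ^ 2 ≠ 0 := pow_ne_zero 2 hD
    have hαne : α ≠ 0 := fun h => hD2 (by rw [← hkey, h, zero_mul])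
    have hβne : β ≠ 0 := fun h => hD2 (by rw [← hkey, h, mul_zero])
    refine ⟨α / D, div_ne_zero hαne hD, ?_⟩
    have hinv : (α / D)⁻¹ = β / D := by
      rw [eq_div_iff hD, inv_mul_eq_iff_eq_mul₀ (div_ne_zero hαne hD)]
      field_simp
      linear_combination -hkey
    rw [hinv]
    funext i
    fin_cases i <;>
    · simp only [Pi.add_apply, Pi.smul_apply, smul_eq_mul, Fin.zero_eta, Fin.mk_one]
      rw [hα, hβ, hDdef]
      have hD' : v₁ 0 * v₂ 1 - v₁ 1 * v₂ 0 ≠ 0 := hD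
      rw [div_mul_eq_mul_div, div_mul_eq_mul_div, add_assoc, ← add_div,
        ← sub_eq_iff_eq_add', eq_div_iff hD']
      ring
  · rintro ⟨t, ht, rfl⟩
    have htt : t * t⁻¹ = 1 := mul_inv_cancel₀ ht
    have hc : ∀ i, c i + t * v₁ i + t⁻¹ * v₂ i - c i = t * v₁ i + t⁻¹ * v₂ i := by
      intro i; ring
    simp only [Pi.add_apply, Pi.smul_apply, smul_eq_mul, hc]
    linear_combination t^2 * h1 + t⁻¹^2 * h2 + 2 * t * t⁻¹ * h12
      + t * t⁻¹ * (v₁ 0 * v₂ 1 - v₁ 1 * v₂ 0) * hsym + htt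

theorem stmt5 (A : Matrix (Fin 2) (Fin 2) ℝ) (hA : Aᵀ = A) (hdet : A.det < 0)
    (c : Fin 2 → ℝ)
    (H : Set (Fin 2 → ℝ)) (hH : H = {x | (x - c) ⬝ᵥ A *ᵥ (x - c) = 1}) :
    ∃ v₁ v₂ : Fin 2 → ℝ, v₁ ≠ 0 ∧ v₂ ≠ 0 ∧
      (∀ t : ℝ, v₁ ≠ t • v₂) ∧ (∀ t : ℝ, v₂ ≠ t • v₁) ∧
      v₁ ⬝ᵥ A *ᵥ v₁ = 0 ∧ v₂ ⬝ᵥ A *ᵥ v₂ = 0 ∧ v₁ ⬝ᵥ A *ᵥ v₂ = 1/2 ∧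
      H = {x | ∃ t : ℝ, t ≠ 0 ∧ x = c + t • v₁ + t⁻¹ • v₂} := by
  have hsym : A 1 0 = A 0 1 := by
    have := congrFun (congrFun hA 0) 1
    simpa [Matrix.transpose_apply] using this
  have hdet' : A 0 0 * A 1 1 - A 0 1 * A 0 1 < 0 := by
    have := Matrix.det_fin_two A
    rw [hsym] at this; linarith [hdet, this.symm.le, this.le]
  rw [hH]
  by_cases ha : A 0 0 = 0
  · set a := A 0 0 with ha'
    set b := A 0 1 with hb'
    set d := A 1 1 with hd'
    have hb : b ≠ 0 := by intro h; rw [ha, h] at hdet'; simp at hdet'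
    set k := 1/(4*b^2) with hk'
    have hk : k ≠ 0 := by
      rw [hk']; exact one_div_ne_zero (by positivity)
    have h1 : (![1, 0] : Fin 2 → ℝ) ⬝ᵥ A *ᵥ ![1, 0] = 0 := by
      rw [expand_qf]; simp only [Matrix.cons_val_zero, Matrix.cons_val_one, Matrix.head_cons, hsym]
      linear_combination ha
    have h2 : (![-d*k, 2*b*k] : Fin 2 → ℝ) ⬝ᵥ A *ᵥ ![-d*k, 2*b*k] = 0 := by
      rw [expand_qf]; simp only [Matrix.cons_val_zero, Matrix.cons_val_one, Matrix.head_cons, hsym]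
      linear_combination (d^2*k^2) * ha
    have h12 : (![1, 0] : Fin 2 → ℝ) ⬝ᵥ A *ᵥ ![-d*k, 2*b*k] = 1/2 := by
      rw [expand_qf]; simp only [Matrix.cons_val_zero, Matrix.cons_val_one, Matrix.head_cons, hsym]
      rw [hk']
      field_simp
      linear_combination (-2*d) * ha
    have hD : (![1, 0] : Fin 2 → ℝ) 0 * (![-d*k, 2*b*k] : Fin 2 → ℝ) 1
        - (![1, 0] : Fin 2 → ℝ) 1 * (![-d*k, 2*b*k] : Fin 2 → ℝ) 0 ≠ 0 := by
      simp only [Matrix.cons_val_zero, Matrix.cons_val_one, Matrix.head_cons]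
      have : (1:ℝ) * (2*b*k) - 0 * (-d*k) = 2*b*k := by ring
      rw [this]
      exact mul_ne_zero (mul_ne_zero two_ne_zero hb) hk
    exact ⟨_, _, key A hsym c ![1, 0] ![-d*k, 2*b*k] h1 h2 h12 hD⟩
  · set a := A 0 0 with ha'
    set b := A 0 1 with hb'
    set d := A 1 1 with hd'
    have hpos : 0 < b^2 - a*d := by nlinarith
    set s := Real.sqrt (b^2 - a*d) with hs'
    have hs : s^2 = b^2 - a*d := Real.sq_sqrt hpos.le
    have hspos : 0 < s := Real.sqrt_pos.mpr hpos
    have hd0 : a*d - b^2 ≠ 0 := by nlinarith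
    set k := 1/(4*a*(a*d-b^2)) with hk'
    have hk : k ≠ 0 := by
      rw [hk']
      exact one_div_ne_zero (mul_ne_zero (mul_ne_zero four_ne_zero ha) hd0)
    have h1 : (![s - b, a] : Fin 2 → ℝ) ⬝ᵥ A *ᵥ ![s - b, a] = 0 := by
      rw [expand_qf]; simp only [Matrix.cons_val_zero, Matrix.cons_val_one, Matrix.head_cons, hsym]
      linear_combination a * hs
    have h2 : (![(-(b+s))*k, a*k] : Fin 2 → ℝ) ⬝ᵥ A *ᵥ ![(-(b+s))*k, a*k] = 0 := by
      rw [expand_qf]; simp only [Matrix.cons_val_zero, Matrix.cons_val_one, Matrix.head_cons, hsym]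
      linear_combination a * k^2 * hs
    have h12 : (![s - b, a] : Fin 2 → ℝ) ⬝ᵥ A *ᵥ ![(-(b+s))*k, a*k] = 1/2 := by
      rw [expand_qf]; simp only [Matrix.cons_val_zero, Matrix.cons_val_one, Matrix.head_cons, hsym]
      rw [hk']
      field_simp
      linear_combination (-2*a) * hs
    have hD : (![s - b, a] : Fin 2 → ℝ) 0 * (![(-(b+s))*k, a*k] : Fin 2 → ℝ) 1
        - (![s - b, a] : Fin 2 → ℝ) 1 * (![(-(b+s))*k, a*k] : Fin 2 → ℝ) 0 ≠ 0 := by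
      simp only [Matrix.cons_val_zero, Matrix.cons_val_one, Matrix.head_cons]
      have : (s - b) * (a*k) - a * ((-(b+s))*k) = 2*a*k*s := by ring
      rw [this]
      exact mul_ne_zero (mul_ne_zero (mul_ne_zero two_ne_zero ha) hk) hspos.ne'
    exact ⟨_, _, key A hsym c ![s - b, a] ![(-(b+s))*k, a*k] h1 h2 h12 hD⟩
end

section
/- Let p ∈ ℝ² with p₁, p₂ ∉ {0,1} and p₁ + p₂ ≠ 1, μ = (1/2,1/2), ν = (p₁/2, p₂/2), τ₁ = (1/2)p₁/(1−p₂), τ₂ = (1/2)p₂/(1−p₁). For d = μ + t(ν − μ), t ∈ ℝ, define k = d₁d₂ + τ₁ − d₁ − 2τ₁d₂ and B = [[d₁², k], [k, d₂²]]. Then k = d₁d₂ + (t − 1)/2 and det B = −(1/4)·t·(t − 1)·(t·(p₁−1)(p₂−1) + (p₁+p₂−1)). -/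
open Matrix

theorem stmt13 (p₁ p₂ : ℝ)
    (h1 : p₁ ≠ 0) (h2 : p₂ ≠ 0) (h3 : p₁ ≠ 1) (h4 : p₂ ≠ 1) (h5 : p₁ + p₂ ≠ 1)
    (τ₁ τ₂ : ℝ) (hτ₁ : τ₁ = (1/2) * p₁ / (1 - p₂)) (hτ₂ : τ₂ = (1/2) * p₂ / (1 - p₁))
    (t : ℝ) (d₁ d₂ : ℝ)
    (hd₁ : d₁ = 1/2 + t * (p₁/2 - 1/2)) (hd₂ : d₂ = 1/2 + t * (p₂/2 - 1/2))
    (k : ℝ) (hk : k = d₁ * d₂ + τ₁ - d₁ - 2 * τ₁ * d₂)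
    (B : Matrix (Fin 2) (Fin 2) ℝ) (hB : B = !![d₁ ^ 2, k; k, d₂ ^ 2]) :
    k = d₁ * d₂ + (t - 1) / 2 ∧
    B.det = -(1/4) * t * (t - 1) * (t * (p₁ - 1) * (p₂ - 1) + (p₁ + p₂ - 1)) := by
  have h4' : 1 - p₂ ≠ 0 := by intro h; apply h4; linarith
  have hk' : k = d₁ * d₂ + (t - 1) / 2 := by
    subst hτ₁ hd₁ hd₂ hk; field_simp; ring
  refine ⟨hk', ?_⟩
  rw [hB, Matrix.det_fin_two_of, hk', hd₁, hd₂]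
  ring
end

section
/- Let p ∈ ℝ², v ∈ ℝ², α ∈ ℝ, and define f(x) = v₁x₁(1−x₁) + v₂x₂(1−x₂) + 2αx₁x₂. Suppose α ≠ 0, f(p) = 0, and c ∈ ℝ² satisfies the gradient condition ∇f(c) = 0, equivalently v₁(c₁ − 1/2) = αc₂ and v₂(c₂ − 1/2) = αc₁ (up to sign conventions: v₁(1 − 2c₁) + 2αc₂ = 0 and v₂(1 − 2c₂) + 2αc₁ = 0). Then Γ(c) = 0, where Γ(x) = p₂(1−p₂)x₁(x₁−1/2) + p₁(1−p₁)x₂(x₂−1/2) + 2p₁p₂(x₁−1/2)(x₂−1/2). -/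
theorem stmt18 (p₁ p₂ v₁ v₂ α : ℝ) (hα : α ≠ 0)
    (f : ℝ → ℝ → ℝ)
    (hf : ∀ x₁ x₂, f x₁ x₂ = v₁ * (x₁ * (1 - x₁)) + v₂ * (x₂ * (1 - x₂))
        + 2 * α * (x₁ * x₂))
    (hp : f p₁ p₂ = 0)
    (c₁ c₂ : ℝ)
    (hg1 : v₁ * (1 - 2 * c₁) + 2 * α * c₂ = 0)
    (hg2 : v₂ * (1 - 2 * c₂) + 2 * α * c₁ = 0)
    (Γ : ℝ → ℝ → ℝ)
    (hΓ : ∀ x₁ x₂, Γ x₁ x₂ = p₂ * (1 - p₂) * (x₁ * (x₁ - 1/2))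
        + p₁ * (1 - p₁) * (x₂ * (x₂ - 1/2))
        + 2 * p₁ * p₂ * ((x₁ - 1/2) * (x₂ - 1/2))) :
    Γ c₁ c₂ = 0 := by
  rw [hf] at hp
  rw [hΓ]
  have e1 : α * c₂ = v₁ * (c₁ - 1/2) := by linarith
  have e2 : α * c₁ = v₂ * (c₂ - 1/2) := by linarith
  have key : α^2 * (p₂ * (1 - p₂) * (c₁ * (c₁ - 1/2))
      + p₁ * (1 - p₁) * (c₂ * (c₂ - 1/2))
      + 2 * p₁ * p₂ * ((c₁ - 1/2) * (c₂ - 1/2))) = 0 := by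
    linear_combination (α * (c₁ - 1/2) * (c₂ - 1/2)) * hp
      + (p₂ * (1 - p₂) * α * (c₁ - 1/2)) * e2
      + (p₁ * (1 - p₁) * α * (c₂ - 1/2)) * e1
  have h2 : α^2 ≠ 0 := pow_ne_zero _ hα
  exact (mul_eq_zero.mp key).resolve_left h2
end

section
/- Let d ∈ ℝ² with Γ(d) = 0 (Γ as the nine-point conic polynomial of the quadrilateral (0,0), (1,0), p, (0,1)), d₁, d₂ ∉ {0, 1/2}, and d₁ + d₂ ≠ 1/2. Define B = [[−d₂(d₂ − 1/2), (d₁−1/2)(d₂−1/2)], [(d₁−1/2)(d₂−1/2), −d₁(d₁ − 1/2)]] and g(x) = (x−d)ᵀB(x−d) − dᵀBd. Then det B = (d₁−1/2)(d₂−1/2)(d₁+d₂−1/2)/2 ≠ 0, and g vanishes at all four points (0,0), (1,0), p, (0,1). -/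
open Matrix

theorem stmt19 (p₁ p₂ : ℝ)
    (Γ : ℝ → ℝ → ℝ)
    (hΓ : ∀ x₁ x₂, Γ x₁ x₂ = p₂ * (1 - p₂) * (x₁ * (x₁ - 1/2))
        + p₁ * (1 - p₁) * (x₂ * (x₂ - 1/2))
        + 2 * p₁ * p₂ * ((x₁ - 1/2) * (x₂ - 1/2)))
    (d : Fin 2 → ℝ) (hΓd : Γ (d 0) (d 1) = 0)
    (hd10 : d 0 ≠ 0) (hd1h : d 0 ≠ 1/2) (hd20 : d 1 ≠ 0) (hd2h : d 1 ≠ 1/2)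
    (hsum : d 0 + d 1 ≠ 1/2)
    (B : Matrix (Fin 2) (Fin 2) ℝ)
    (hB : B = !![-(d 1) * (d 1 - 1/2), (d 0 - 1/2) * (d 1 - 1/2);
                 (d 0 - 1/2) * (d 1 - 1/2), -(d 0) * (d 0 - 1/2)])
    (g : (Fin 2 → ℝ) → ℝ)
    (hg : ∀ x, g x = (x - d) ⬝ᵥ B *ᵥ (x - d) - d ⬝ᵥ B *ᵥ d) :
    B.det = (d 0 - 1/2) * (d 1 - 1/2) * (d 0 + d 1 - 1/2) / 2 ∧ B.det ≠ 0 ∧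
    g ![0, 0] = 0 ∧ g ![1, 0] = 0 ∧ g ![p₁, p₂] = 0 ∧ g ![0, 1] = 0 := by
  rw [hΓ] at hΓd
  have hdet : B.det = (d 0 - 1/2) * (d 1 - 1/2) * (d 0 + d 1 - 1/2) / 2 := by
    rw [hB, Matrix.det_fin_two_of]
    ring
  refine ⟨hdet, ?_, ?_, ?_, ?_, ?_⟩
  · rw [hdet]
    have h1 : d 0 - 1/2 ≠ 0 := sub_ne_zero.mpr hd1h
    have h2 : d 1 - 1/2 ≠ 0 := sub_ne_zero.mpr hd2h
    have h3 : d 0 + d 1 - 1/2 ≠ 0 := sub_ne_zero.mpr hsum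
    positivity
  all_goals
    rw [hg, hB]
    simp only [dotProduct, Matrix.mulVec, Fin.sum_univ_two, Pi.sub_apply,
      Matrix.of_apply, Matrix.cons_val', Matrix.cons_val_zero, Matrix.cons_val_one,
      Matrix.head_cons, Matrix.empty_val', Matrix.cons_val_fin_one, Matrix.head_fin_const]
  · ring
  · ring
  · linear_combination hΓd
  · ring
end
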